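/- Let 0 ≤ λ_H < λ ≤ 1, and for m ∈ ℕ define Γ(m) = 1/(Σ_{k=0}^{m} λ^k + λ^m λ_H/(1−λ_H)), Λ(m) = Σ_{k=0}^{m−1} λ^k u(k), and Φ(m) = Γ(m)Λ(m), where u : ℕ → ℝ is strictly decreasing with u(0) > 0. Then Φ(1) > Φ(0), and for all m ≥ 1: if Φ(m) ≤ Φ(m−1) then Φ(m+1) ≤ Φ(m). Hence Φ is unimodal on ℕ: increasing up to its maximum and decreasing afterwards. -/

import Mathlib

/-!
Writing `Φ m = Λ m / D m` with `D m = 1 / Γ m`, both numerator and denominator are partial sums: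
step `m` adds `λ^m u(m)` to `Λ` and `λ^m (λ - λ_H) / (1 - λ_H)` to `D`. The new ratio is a mediant
of the old one and of the marginal ratio `u(m) (1 - λ_H) / (λ - λ_H)`, which decreases in `m`.
So `Φ` decreases at step `m` exactly when the marginal ratio lies below `Φ m`; it then also lies
below the mediant `Φ (m + 1)`, and the next, smaller, marginal ratio does too.
-/

section Mediant

variable {a b c d : ℝ}

theorem add_div_add_le_div_iff (hb : 0 < b) (hd : 0 < d) :
    (a + c) / (b + d) ≤ a / b ↔ c / d ≤ a / b := by
  rw [div_le_div_iff₀ (by positivity) hb, div_le_div_iff₀ hd hb]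
  constructor <;> intro h <;> nlinarith

theorem div_le_add_div_add_of_div_le (hb : 0 < b) (hd : 0 < d) (h : c / d ≤ a / b) :
    c / d ≤ (a + c) / (b + d) := by
  rw [div_le_div_iff₀ hd hb] at h
  rw [div_le_div_iff₀ hd (by positivity)]
  nlinarith

end Mediant

theorem div_succ_le_of_antitone_increment_ratio {N D p q : ℕ → ℝ}
    (hD : ∀ m, 0 < D m) (hq : ∀ m, 0 < q m)
    (hN_succ : ∀ m, N (m + 1) = N m + p m) (hD_succ : ∀ m, D (m + 1) = D m + q m)
    (hpq : Antitone fun m => p m / q m) {m : ℕ}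
    (h : N (m + 1) / D (m + 1) ≤ N m / D m) :
    N (m + 2) / D (m + 2) ≤ N (m + 1) / D (m + 1) := by
  rw [hN_succ, hD_succ, add_div_add_le_div_iff (hD m) (hq m)] at h
  rw [hN_succ (m + 1), hD_succ (m + 1), add_div_add_le_div_iff (hD _) (hq _)]
  calc p (m + 1) / q (m + 1) ≤ p m / q m := hpq m.le_succ
    _ ≤ (N m + p m) / (D m + q m) := div_le_add_div_add_of_div_le (hD m) (hq m) h
    _ = N (m + 1) / D (m + 1) := by rw [hN_succ, hD_succ]

/-- `1 / Γ(m)`: the steady-state normalizing mass of the threshold policy `m`. -/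
noncomputable def thresholdMass (lam lamH : ℝ) (m : ℕ) : ℝ :=
  ∑ k ∈ Finset.range (m + 1), lam ^ k + lam ^ m * lamH / (1 - lamH)

section ThresholdMass

variable {lam lamH : ℝ}

theorem thresholdMass_succ (hH1 : lamH ≠ 1) (m : ℕ) :
    thresholdMass lam lamH (m + 1) =
      thresholdMass lam lamH m + lam ^ m * ((lam - lamH) / (1 - lamH)) := by
  have : 1 - lamH ≠ 0 := sub_ne_zero.mpr hH1.symm
  simp only [thresholdMass, Finset.sum_range_succ]
  field_simp
  ring

theorem thresholdMass_pos (hlam : 0 < lam) (hH0 : 0 ≤ lamH) (hH1 : lamH < 1) (m : ℕ) :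
    0 < thresholdMass lam lamH m := by
  have hsum : 0 < ∑ k ∈ Finset.range (m + 1), lam ^ k :=
    Finset.sum_pos (fun k _ => pow_pos hlam k) Finset.nonempty_range_add_one
  have htail : 0 ≤ lam ^ m * lamH / (1 - lamH) := by
    have := sub_pos.mpr hH1
    positivity
  exact add_pos_of_pos_of_nonneg hsum htail

end ThresholdMass

/-- unimodality of the normalized low-need welfare `Φ = Γ * Λ`
over integer thresholds: `Φ 1 > Φ 0` and once `Φ` decreases it keeps decreasing. -/
theorem stmt10 (u : ℕ → ℝ) (lam lamH : ℝ)
    (hH0 : 0 ≤ lamH) (hHl : lamH < lam) (hl1 : lam ≤ 1)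
    (hu : StrictAnti u) (hu0 : 0 < u 0)
    (Γ Λf Φ : ℕ → ℝ)
    (hΓ : ∀ m, Γ m = 1 / (∑ k ∈ Finset.range (m + 1), lam ^ k + lam ^ m * lamH / (1 - lamH)))
    (hΛ : ∀ m, Λf m = ∑ k ∈ Finset.range m, lam ^ k * u k)
    (hΦ : ∀ m, Φ m = Γ m * Λf m) :
    Φ 0 < Φ 1 ∧ ∀ m : ℕ, 1 ≤ m → Φ m ≤ Φ (m - 1) → Φ (m + 1) ≤ Φ m := by
  have hlam : 0 < lam := hH0.trans_lt hHl
  have hH1 : lamH < 1 := hHl.trans_le hl1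
  have hmass := thresholdMass_pos hlam hH0 hH1
  have hΦ_div : ∀ m, Φ m = Λf m / thresholdMass lam lamH m := fun m => by
    rw [hΦ, hΓ, one_div_mul_eq_div, thresholdMass]
  set a := (lam - lamH) / (1 - lamH)
  have ha : 0 < a := div_pos (sub_pos.mpr hHl) (sub_pos.mpr hH1)
  refine ⟨?_, fun m hm h => ?_⟩
  · simpa [hΦ_div, hΛ] using div_pos hu0 (hmass 1)
  · obtain ⟨n, rfl⟩ := Nat.exists_eq_add_of_le' hm
    simp only [hΦ_div, Nat.add_sub_cancel] at h ⊢
    refine div_succ_le_of_antitone_increment_ratio hmass (q := fun m => lam ^ m * a)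
      (fun m => mul_pos (pow_pos hlam m) ha) (fun m => by rw [hΛ, hΛ, Finset.sum_range_succ])
      (thresholdMass_succ hH1.ne) (fun i j hij => ?_) h
    simp only [mul_div_mul_left _ _ (pow_pos hlam _).ne']
    exact div_le_div_of_nonneg_right (hu.antitone hij) ha.le
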